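/- Consider ℤ^{d+1} = ℤ^d × ℤ split into halves ℤ^{d+1}_± = ℤ^d × (±ℕ₊) separated by the boundary Γ = ℤ^d × {0}, with inward normal direction N = e_{d+1}. Let ℙ be the adapted projection on ℓ²(ℤ^{d+1}; ℂ^{2(d+1)}) with symbol P(x) = 1 for x ∈ ℤ^{d+1}_+, P(x) = 0 for x ∈ ℤ^{d+1}_−, and P(x) = 1 − |N⟩⟨N| for x ∈ Γ. Let ℂ be any coin whose symbol, for every x ∈ Γ, maps the span of the tangential directions {|±j⟩ : 1 ≤ j ≤ d} to itself and reflects the normal: C(x)|+N⟩ = |−N⟩ and C(x)|−N⟩ = |+N⟩. Then for the quantum walk U = T∘ℂ one has U*ℙU = ℙ, i.e. the flux Φ := U*ℙU − ℙ vanishes identically. -/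

import Mathlib

/-! Both `ℙ` and the shift are diagonal in the direction basis, so `ℙU = Uℙ` (which, `U` being
unitary, is the claim) can be checked one component at a time: the `τ`-component of `Uψ` at
`y + τ` is `(C(y) ψ(y))_τ`. Off `Γ`, `P(y)` is `0` or `1`, and a step from `y` either stays on
its side of `Γ` or reaches `Γ` along the normal, where `P(y + τ)` has the same weight `P(y)` on
`|τ⟩`. At `y ∈ Γ` the projection removes `|+N⟩`, which the coin sends to `|−N⟩`, the one
direction leaving into the lower half space where `P` vanishes; the coin's other outputs never
reach `|−N⟩`. -/

open ContinuousLinearMap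

noncomputable section

/-- Sites of the lattice `ℤ^{d+1}`. -/
abbrev Site (d : ℕ) := Fin (d + 1) → ℤ

/-- The coin space `ℂ^{2(d+1)}`. -/
abbrev CoinSp (d : ℕ) := EuclideanSpace ℂ (Fin (2 * (d + 1)))

/-- The Hilbert space `ℓ²(ℤ^{d+1}; ℂ^{2(d+1)})`. -/
abbrev QWH (d : ℕ) := lp (fun _ : Site d => CoinSp d) 2

/-- The lattice vector of the `i`-th quantum direction. -/
def dirVec (d : ℕ) (i : Fin (2 * (d + 1))) : Site d :=
  fun j => if (j : ℕ) = (i : ℕ) / 2 then (if (i : ℕ) % 2 = 0 then 1 else -1) else 0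

/-- The coin-space basis vector `|τ⟩` of the `i`-th direction. -/
def coinVec (d : ℕ) (i : Fin (2 * (d + 1))) : CoinSp d := EuclideanSpace.single i 1

/-- The rank-one projection `P_τ = |τ⟩⟨τ|`. -/
def Pdir (d : ℕ) (i : Fin (2 * (d + 1))) : CoinSp d →L[ℂ] CoinSp d :=
  (innerSL ℂ (coinVec d i)).smulRight (coinVec d i)

/-- The index of the inward normal direction `|+N⟩ = |+e_{d+1}⟩`. -/
def idxPN (d : ℕ) : Fin (2 * (d + 1)) := ⟨2 * d, by omega⟩

/-- The index of the outward normal direction `|−N⟩ = |−e_{d+1}⟩`. -/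
def idxMN (d : ℕ) : Fin (2 * (d + 1)) := ⟨2 * d + 1, by omega⟩

/-- The last (normal) coordinate of a site of `ℤ^{d+1} = ℤ^d × ℤ`. -/
def lastCoord (d : ℕ) (x : Site d) : ℤ := x (Fin.last d)

/-- The symbol of the bulk projection: `1` on `ℤ^{d+1}_+`, `0` on `ℤ^{d+1}_−` and
`1 − |N⟩⟨N|` on the boundary `Γ = ℤ^d × {0}`. -/
def bulkSym (d : ℕ) (x : Site d) : CoinSp d →L[ℂ] CoinSp d :=
  if 0 < lastCoord d x then 1 else if lastCoord d x < 0 then 0 else 1 - Pdir d (idxPN d)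

theorem EuclideanSpace.map_apply_eq_apply_of_single {𝕜 ι : Type*} [RCLike 𝕜] [DecidableEq ι]
    {a b : ι} (hab : a ≠ b) (f : EuclideanSpace 𝕜 ι →ₗ[𝕜] EuclideanSpace 𝕜 ι)
    (hf : ∀ v : EuclideanSpace 𝕜 ι, v a = 0 → v b = 0 → f v b = 0)
    (ha : f (EuclideanSpace.single a 1) b = 1) (hb : f (EuclideanSpace.single b 1) b = 0)
    (v : EuclideanSpace 𝕜 ι) : f v b = v a := by
  set s : EuclideanSpace 𝕜 ι :=
    v a • EuclideanSpace.single a (1 : 𝕜) + v b • EuclideanSpace.single b (1 : 𝕜)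
  have ht : f (v - s) b = 0 := hf (v - s) (by simp [s, hab]) (by simp [s, hab.symm])
  calc f v b = f (v - s + s) b := by rw [sub_add_cancel]
    _ = v a := by
        rw [map_add, PiLp.add_apply, ht, map_add, map_smul, map_smul, PiLp.add_apply,
          PiLp.smul_apply, PiLp.smul_apply, ha, hb]
        simp

theorem idxPN_ne_idxMN (d : ℕ) : idxPN d ≠ idxMN d := by
  simp [idxPN, idxMN, Fin.ext_iff]

theorem coinVec_apply (d : ℕ) (i j : Fin (2 * (d + 1))) :
    coinVec d i j = if j = i then 1 else 0 := by
  simp [coinVec, PiLp.single_apply]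

def IsBoundaryReflection (d : ℕ) (c : CoinSp d →L[ℂ] CoinSp d) : Prop :=
  (∀ v : CoinSp d, v (idxPN d) = 0 → v (idxMN d) = 0 → c v (idxPN d) = 0 ∧ c v (idxMN d) = 0) ∧
    c (coinVec d (idxPN d)) = coinVec d (idxMN d) ∧ c (coinVec d (idxMN d)) = coinVec d (idxPN d)

theorem IsBoundaryReflection.apply_idxMN {d : ℕ} {c : CoinSp d →L[ℂ] CoinSp d}
    (hc : IsBoundaryReflection d c) (v : CoinSp d) : c v (idxMN d) = v (idxPN d) :=
  EuclideanSpace.map_apply_eq_apply_of_single (idxPN_ne_idxMN d) c.toLinearMap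
    (fun v h₁ h₂ => (hc.1 v h₁ h₂).2)
    (by simpa [coinVec] using congrArg (· (idxMN d)) hc.2.1)
    (by simpa [coinVec, (idxPN_ne_idxMN d).symm] using congrArg (· (idxMN d)) hc.2.2) v

theorem lastCoord_add_dirVec (d : ℕ) (y : Site d) (i : Fin (2 * (d + 1))) :
    lastCoord d (y + dirVec d i) =
      lastCoord d y + if i = idxPN d then 1 else if i = idxMN d then -1 else 0 := by
  have hi := i.isLt
  simp only [lastCoord, Pi.add_apply, dirVec, Fin.val_last, idxPN, idxMN, Fin.ext_iff]
  split_ifs <;> omega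

theorem bulkSym_of_pos {d : ℕ} {x : Site d} (h : 0 < lastCoord d x) : bulkSym d x = 1 := by
  simp [bulkSym, h]

theorem bulkSym_of_neg {d : ℕ} {x : Site d} (h : lastCoord d x < 0) : bulkSym d x = 0 := by
  simp [bulkSym, h, h.not_gt]

theorem bulkSym_apply_of_zero {d : ℕ} {x : Site d} (h : lastCoord d x = 0) (v : CoinSp d) :
    bulkSym d x v = v - v (idxPN d) • coinVec d (idxPN d) := by
  simp [bulkSym, h, Pdir, coinVec, EuclideanSpace.inner_single_left]

theorem bulkSym_apply (d : ℕ) (x : Site d) (v : CoinSp d) (i : Fin (2 * (d + 1))) :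
    bulkSym d x v i =
      if 0 < lastCoord d x ∨ (lastCoord d x = 0 ∧ i ≠ idxPN d) then v i else 0 := by
  rcases lt_trichotomy (lastCoord d x) 0 with h | h | h
  · simp [bulkSym_of_neg h, h.ne, h.not_gt]
  · by_cases hi : i = idxPN d <;> simp [bulkSym_apply_of_zero h, h, hi, coinVec_apply]
  · simp [bulkSym_of_pos h, h]

theorem bulkSym_add_dirVec_apply_map {d : ℕ} {c : CoinSp d →L[ℂ] CoinSp d} {y : Site d}
    (hc : lastCoord d y = 0 → IsBoundaryReflection d c) (v : CoinSp d) (i : Fin (2 * (d + 1))) :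
    bulkSym d (y + dirVec d i) (c v) i = c (bulkSym d y v) i := by
  have hPM := idxPN_ne_idxMN d
  rw [bulkSym_apply, lastCoord_add_dirVec]
  rcases lt_trichotomy (lastCoord d y) 0 with hy | hy | hy
  · rw [bulkSym_of_neg hy]
    by_cases hP : i = idxPN d <;> by_cases hM : i = idxMN d <;> simp [hP, hM] <;> omega
  · have hc := hc hy
    rw [bulkSym_apply_of_zero hy, map_sub, map_smul, hc.2.1, PiLp.sub_apply, PiLp.smul_apply,
      coinVec_apply]
    by_cases hP : i = idxPN d
    · simp [hy, hP, hPM]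
    by_cases hM : i = idxMN d
    · simp [hy, hM, hPM.symm, hc.apply_idxMN]
    · simp [hy, hP, hM]
  · rw [bulkSym_of_pos hy]
    by_cases hP : i = idxPN d <;> by_cases hM : i = idxMN d <;> simp [hP, hM] <;> omega

theorem commute_bulk_walk {d : ℕ} {C : Site d → (CoinSp d →L[ℂ] CoinSp d)}
    (hC : ∀ x, lastCoord d x = 0 → IsBoundaryReflection d (C x)) {U : QWH d →L[ℂ] QWH d}
    (hU : ∀ (ψ : QWH d) (x : Site d) (i : Fin (2 * (d + 1))),
      (U ψ) x i = (C (x - dirVec d i) (ψ (x - dirVec d i))) i)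
    {Pop : QWH d →L[ℂ] QWH d}
    (hPop : ∀ (ψ : QWH d) (x : Site d), (Pop ψ) x = bulkSym d x (ψ x)) :
    Commute Pop U := by
  refine ContinuousLinearMap.ext fun ψ => lp.ext <| funext fun x => PiLp.ext fun i => ?_
  show Pop (U ψ) x i = U (Pop ψ) x i
  rw [hPop (U ψ), hU (Pop ψ), hPop, ← bulkSym_add_dirVec_apply_map (hC _), sub_add_cancel,
    bulkSym_apply, bulkSym_apply, hU]

theorem stmt_14_general (d : ℕ)
    (C : Site d → (CoinSp d →L[ℂ] CoinSp d))
    -- on Γ the coin maps the tangential subspace to itself …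
    (hCtang : ∀ x : Site d, lastCoord d x = 0 → ∀ v : CoinSp d,
      v (idxPN d) = 0 → v (idxMN d) = 0 →
        (C x v) (idxPN d) = 0 ∧ (C x v) (idxMN d) = 0)
    -- … and reflects the normal direction
    (hCrefl : ∀ x : Site d, lastCoord d x = 0 →
      C x (coinVec d (idxPN d)) = coinVec d (idxMN d) ∧
      C x (coinVec d (idxMN d)) = coinVec d (idxPN d))
    (U : QWH d →L[ℂ] QWH d)
    (hUunit : adjoint U * U = 1 ∧ U * adjoint U = 1)
    (hU : ∀ (ψ : QWH d) (x : Site d) (i : Fin (2 * (d + 1))),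
      (U ψ) x i = (C (x - dirVec d i) (ψ (x - dirVec d i))) i)
    (Pop : QWH d →L[ℂ] QWH d)
    (hPop : ∀ (ψ : QWH d) (x : Site d), (Pop ψ) x = bulkSym d x (ψ x)) :
    adjoint U * Pop * U = Pop := by
  have hcomm : Commute Pop U :=
    commute_bulk_walk (fun x hx => ⟨hCtang x hx, hCrefl x hx⟩) hU hPop
  rw [mul_assoc, hcomm.eq, ← mul_assoc, hUunit.1, one_mul]

/-- Let `ℙ` be the adapted projection which is full in the upper half space
`ℤ^{d+1}_+`, zero in the lower half space, and `1 − |N⟩⟨N|` on the boundary `Γ`, and let the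
coin leave the tangential subspace invariant and reflect the normal (`C(x)|±N⟩ = |∓N⟩`) on `Γ`.
Then the quantum walk `U = T∘ℂ` satisfies `U*ℙU = ℙ`, i.e. the flux vanishes. -/
theorem stmt_14 (d : ℕ)
    (C : Site d → (CoinSp d →L[ℂ] CoinSp d))
    (hCunit : ∀ x, adjoint (C x) * C x = 1 ∧ C x * adjoint (C x) = 1)
    -- on Γ the coin maps the tangential subspace to itself …
    (hCtang : ∀ x : Site d, lastCoord d x = 0 → ∀ v : CoinSp d,
      v (idxPN d) = 0 → v (idxMN d) = 0 →
        (C x v) (idxPN d) = 0 ∧ (C x v) (idxMN d) = 0)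
    -- … and reflects the normal direction
    (hCrefl : ∀ x : Site d, lastCoord d x = 0 →
      C x (coinVec d (idxPN d)) = coinVec d (idxMN d) ∧
      C x (coinVec d (idxMN d)) = coinVec d (idxPN d))
    (U : QWH d →L[ℂ] QWH d)
    (hUunit : adjoint U * U = 1 ∧ U * adjoint U = 1)
    (hU : ∀ (ψ : QWH d) (x : Site d) (i : Fin (2 * (d + 1))),
      (U ψ) x i = (C (x - dirVec d i) (ψ (x - dirVec d i))) i)
    (Pop : QWH d →L[ℂ] QWH d)
    (hPop : ∀ (ψ : QWH d) (x : Site d), (Pop ψ) x = bulkSym d x (ψ x)) :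
    adjoint U * Pop * U = Pop :=
  stmt_14_general d C hCtang hCrefl U hUunit hU Pop hPop
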